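/- Fix 1 < p < ∞, 1 ≤ r < ∞, and let Young functions Φ₁, Φ₂ satisfy the modular inequality ∫₀^∞ Φ₁(H^{p,r}f*(t)) dt ≤ ∫₀^∞ Φ₂(K f*(s)) ds for all nonincreasing f* ≥ 0. Then t^p ∫₀ᵗ Φ₁(s)/s^{p+1} ds ≤ (1/p) Φ₂(K (r/p)^{1/r} t) for all t > 0. -/

import Mathlib

/-!
Test the modular inequality with `f = a · 1_{(-∞, 1]}`, `a = (r/p)^{1/r} t`. Then `H^{p,r} f = t`
on `(0, 1]` and `H^{p,r} f (u) = t u^{-1/p}` for `u > 1`, while the right-hand side equals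
`Φ₂(K a)`. Discarding the part over `(0, 1]` and substituting `x = t u^{-1/p}` turns
`∫₁^∞ Φ₁(t u^{-1/p}) du` into `p t^p ∫₀ᵗ Φ₁(x) x^{-p-1} dx`.
-/

open MeasureTheory Set

/-- The Calderón-type operator
`H^{p,r} g (t) = (t^{-r/p} ∫₀ᵗ g(s)^r s^{r/p-1} ds)^{1/r}`. -/
noncomputable def Hpr (p r : ℝ) (g : ℝ → ℝ) (t : ℝ) : ℝ :=
  (t ^ (-(r / p)) * ∫ s in (0:ℝ)..t, g s ^ r * s ^ (r / p - 1)) ^ (1 / r)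

section SubstitutionRpow

variable {p t : ℝ}

theorem hasDerivAt_const_mul_rpow (c : ℝ) {u : ℝ} (hu : 0 < u) :
    HasDerivAt (fun u : ℝ => t * u ^ c) (t * (c * u ^ (c - 1))) u :=
  (Real.hasDerivAt_rpow_const (Or.inl hu.ne')).const_mul t

theorem injOn_const_mul_rpow {c : ℝ} (hc : c ≠ 0) (ht : t ≠ 0) :
    InjOn (fun u : ℝ => t * u ^ c) (Ici 0) := fun _ hu _ hv h =>
  Real.rpow_left_injOn hc hu hv (mul_left_cancel₀ ht h)

theorem image_mul_rpow_neg_Ioi_one (hp : 0 < p) (ht : 0 < t) :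
    (fun u : ℝ => t * u ^ (-(1 / p))) '' Ioi 1 = Ioo 0 t := by
  ext x
  simp only [mem_image, mem_Ioi, mem_Ioo]
  constructor
  · rintro ⟨u, hu, rfl⟩
    have : u ^ (-(1 / p)) < 1 := Real.rpow_lt_one_of_one_lt_of_neg hu (by simp [hp])
    have : 0 < u ^ (-(1 / p)) := Real.rpow_pos_of_pos (by linarith) _
    constructor <;> nlinarith
  · rintro ⟨hx, hxt⟩
    have htx : 0 < t / x := div_pos ht hx
    refine ⟨(t / x) ^ p, Real.one_lt_rpow ((one_lt_div hx).mpr hxt) hp, ?_⟩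
    rw [← Real.rpow_mul htx.le, show p * -(1 / p) = -1 by field_simp, Real.rpow_neg_one, inv_div]
    field_simp

theorem abs_deriv_mul_div_rpow (hp : 0 < p) (ht : 0 < t) {u : ℝ} (hu : 0 < u) (y : ℝ) :
    |t * (-(1 / p) * u ^ (-(1 / p) - 1))| * (y / (t * u ^ (-(1 / p))) ^ (p + 1))
      = (p * t ^ p)⁻¹ * y := by
  have hu' : 0 < u ^ (-(1 / p) - 1) := Real.rpow_pos_of_pos hu _
  rw [abs_of_neg (by nlinarith [mul_pos ht hu', one_div_pos.mpr hp]),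
    Real.mul_rpow ht.le (Real.rpow_nonneg hu.le _), ← Real.rpow_mul hu.le,
    show -(1 / p) * (p + 1) = -(1 / p) - 1 by field_simp; ring,
    Real.rpow_add ht, Real.rpow_one]
  field_simp

variable (g : ℝ → ℝ)

theorem integral_Ioo_div_rpow_eq (hp : 0 < p) (ht : 0 < t) :
    ∫ x in Ioo 0 t, g x / x ^ (p + 1)
      = (p * t ^ p)⁻¹ * ∫ u in Ioi 1, g (t * u ^ (-(1 / p))) := by
  rw [← image_mul_rpow_neg_Ioi_one hp ht,
    integral_image_eq_integral_abs_deriv_smul measurableSet_Ioi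
      (fun u hu => (hasDerivAt_const_mul_rpow _ (one_pos.trans hu)).hasDerivWithinAt)
      ((injOn_const_mul_rpow (by simp [hp.ne']) ht.ne').mono (Ioi_subset_Ici zero_le_one)),
    ← integral_const_mul]
  exact setIntegral_congr_fun measurableSet_Ioi fun u hu =>
    abs_deriv_mul_div_rpow hp ht (one_pos.trans hu) _

theorem integrableOn_Ioi_one_comp_mul_rpow (hp : 0 < p) (ht : 0 < t)
    (hg : IntegrableOn (fun x => g x / x ^ (p + 1)) (Ioo 0 t)) :
    IntegrableOn (fun u => g (t * u ^ (-(1 / p)))) (Ioi 1) := by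
  rw [← image_mul_rpow_neg_Ioi_one hp ht,
    integrableOn_image_iff_integrableOn_abs_deriv_smul measurableSet_Ioi
      (fun u hu => (hasDerivAt_const_mul_rpow _ (one_pos.trans hu)).hasDerivWithinAt)
      ((injOn_const_mul_rpow (by simp [hp.ne']) ht.ne').mono (Ioi_subset_Ici zero_le_one))] at hg
  have hpt : p * t ^ p ≠ 0 := by positivity
  refine IntegrableOn.congr_fun (hg.const_mul (p * t ^ p)) (fun u hu => ?_) measurableSet_Ioi
  rw [smul_eq_mul, abs_deriv_mul_div_rpow hp ht (one_pos.trans hu), mul_inv_cancel_left₀ hpt]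

end SubstitutionRpow

section TestFunction

variable {p r a : ℝ}

theorem antitone_indicator_Iic_const (ha : 0 ≤ a) (b : ℝ) :
    Antitone ((Iic b).indicator fun _ : ℝ => a) := by
  intro x y hxy
  by_cases hy : y ≤ b
  · rw [indicator_of_mem (show x ∈ Iic b from hxy.trans hy),
      indicator_of_mem (show y ∈ Iic b from hy)]
  · rw [indicator_of_notMem (show y ∉ Iic b from hy)]
    exact indicator_nonneg (fun _ _ => ha) x

theorem intervalIntegral_indicator_Iic_one_rpow_mul {q u : ℝ} (hr : 0 < r) (hq : 0 < q)
    (hu : 0 ≤ u) :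
    ∫ s in (0:ℝ)..u, (Iic 1).indicator (fun _ => a) s ^ r * s ^ (q - 1)
      = a ^ r * (min u 1) ^ q / q := by
  have hind : ∀ s, (Iic 1).indicator (fun _ => a) s ^ r * s ^ (q - 1)
      = (Iic 1).indicator (fun s => a ^ r * s ^ (q - 1)) s := fun s => by
    by_cases hs : s ≤ 1
    · simp [hs]
    · simp [hs, Real.zero_rpow hr.ne']
  simp_rw [hind, intervalIntegral.integral_of_le hu, setIntegral_indicator measurableSet_Iic,
    Ioc_inter_Iic, ← intervalIntegral.integral_of_le (le_min hu zero_le_one),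
    intervalIntegral.integral_const_mul, integral_rpow (Or.inl (by linarith : (-1:ℝ) < q - 1)),
    sub_add_cancel, Real.zero_rpow hq.ne', sub_zero, mul_div_assoc]

theorem Hpr_indicator_Iic_one (hp : 0 < p) (hr : 0 < r) (ha : 0 ≤ a) {u : ℝ} (hu : 0 < u) :
    Hpr p r ((Iic 1).indicator fun _ => a) u = (p / r) ^ (1 / r) * a * (min u 1 / u) ^ (1 / p) := by
  have hm : 0 < min u 1 := lt_min hu one_pos
  have hq : 0 < r / p := div_pos hr hp
  have hsplit : u ^ (-(r / p)) * (a ^ r * (min u 1) ^ (r / p) / (r / p))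
      = p / r * a ^ r * (min u 1 / u) ^ (r / p) := by
    rw [Real.div_rpow hm.le hu.le, Real.rpow_neg hu.le]
    field_simp
  rw [Hpr, intervalIntegral_indicator_Iic_one_rpow_mul hr hq hu.le, hsplit,
    Real.mul_rpow (by positivity) (by positivity), Real.mul_rpow (by positivity) (by positivity),
    ← Real.rpow_mul ha, ← Real.rpow_mul (by positivity), mul_one_div_cancel hr.ne',
    Real.rpow_one, show r / p * (1 / r) = 1 / p by field_simp]

theorem Hpr_indicator_Iic_one_of_one_lt (hp : 0 < p) (hr : 0 < r) (ha : 0 ≤ a) {u : ℝ}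
    (hu : 1 < u) :
    Hpr p r ((Iic 1).indicator fun _ => a) u = (p / r) ^ (1 / r) * a * u ^ (-(1 / p)) := by
  rw [Hpr_indicator_Iic_one hp hr ha (one_pos.trans hu), min_eq_right hu.le, one_div u,
    Real.inv_rpow (one_pos.trans hu).le, Real.rpow_neg (one_pos.trans hu).le]

theorem setIntegral_Ioi_zero_comp_indicator_Iic_one (F : ℝ → ℝ) (hF : F 0 = 0) :
    ∫ s in Ioi (0:ℝ), F ((Iic 1).indicator (fun _ => a) s) = F a := by
  have hcomp : (fun s : ℝ => F ((Iic 1).indicator (fun _ => a) s))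
      = (Iic 1).indicator fun _ => F a := by
    funext s
    by_cases hs : s ≤ 1 <;> simp [hs, hF]
  rw [hcomp, setIntegral_indicator measurableSet_Iic, Ioi_inter_Iic, setIntegral_const]
  simp

theorem setIntegral_Ioi_one_le_setIntegral_comp_Hpr_indicator (F : ℝ → ℝ)
    (hF : ∀ x, 0 ≤ x → 0 ≤ F x) (hp : 0 < p) (hr : 0 < r) (ha : 0 ≤ a)
    (hint : IntegrableOn (fun u => F ((p / r) ^ (1 / r) * a * u ^ (-(1 / p)))) (Ioi 1)) :
    ∫ u in Ioi 1, F ((p / r) ^ (1 / r) * a * u ^ (-(1 / p)))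
      ≤ ∫ u in Ioi 0, F (Hpr p r ((Iic 1).indicator fun _ => a) u) := by
  have htail : EqOn (fun u => F (Hpr p r ((Iic 1).indicator fun _ => a) u))
      (fun u => F ((p / r) ^ (1 / r) * a * u ^ (-(1 / p)))) (Ioi 1) := fun u hu =>
    congrArg F (Hpr_indicator_Iic_one_of_one_lt hp hr ha hu)
  have hhead : IntegrableOn (fun u => F (Hpr p r ((Iic 1).indicator fun _ => a) u)) (Ioc 0 1) :=
    IntegrableOn.congr_fun
      (integrableOn_const measure_Ioc_lt_top.ne (C := F ((p / r) ^ (1 / r) * a)))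
      (fun u hu => by
        rw [Hpr_indicator_Iic_one hp hr ha hu.1, min_eq_left hu.2, div_self hu.1.ne',
          Real.one_rpow, mul_one])
      measurableSet_Ioc
  rw [← setIntegral_congr_fun measurableSet_Ioi htail]
  refine setIntegral_mono_set ?_ ?_ (Ioi_subset_Ioi zero_le_one).eventuallyLE
  · rw [← Ioc_union_Ioi_eq_Ioi zero_le_one]
    exact hhead.union (hint.congr_fun htail.symm measurableSet_Ioi)
  · exact ae_restrict_of_forall_mem measurableSet_Ioi fun u hu =>
      hF _ <| (Hpr_indicator_Iic_one hp hr ha hu).symm ▸ mul_nonneg (by positivity)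
        (Real.rpow_nonneg (div_nonneg (le_min hu.le zero_le_one) hu.le) _)

end TestFunction

theorem Hpr_modular_implies_ZygmundStromberg_general (p r : ℝ) (hp : 1 < p) (hr : 1 ≤ r)
    (φ₁ φ₂ Φ₁ Φ₂ : ℝ → ℝ)
    (hφ₁0 : ∀ s, 0 ≤ s → 0 ≤ φ₁ s)
    (hφ₂0 : ∀ s, 0 ≤ s → 0 ≤ φ₂ s)
    (hΦ₁ : ∀ t, Φ₁ t = ∫ s in (0:ℝ)..t, φ₁ s)
    (hΦ₂ : ∀ t, Φ₂ t = ∫ s in (0:ℝ)..t, φ₂ s)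
    {K : ℝ} (hK : 0 < K)
    (hmod : ∀ f : ℝ → ℝ, (∀ s, 0 ≤ f s) → AntitoneOn f (Set.Ioi 0) →
      (∫ t in Set.Ioi (0:ℝ), Φ₁ (Hpr p r f t)) ≤ ∫ s in Set.Ioi (0:ℝ), Φ₂ (K * f s)) :
    ∀ t : ℝ, 0 < t →
      t ^ p * (∫ s in (0:ℝ)..t, Φ₁ s / s ^ (p + 1))
        ≤ (1 / p) * Φ₂ (K * (r / p) ^ (1 / r) * t) := by
  intro t ht
  have hp0 : 0 < p := one_pos.trans hp
  have hr0 : 0 < r := one_pos.trans_le hr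
  have hΦ₁0 : ∀ x, 0 ≤ x → 0 ≤ Φ₁ x := fun x hx => (hΦ₁ x).symm ▸
    intervalIntegral.integral_nonneg hx fun s hs => hφ₁0 s hs.1
  have hΦ₂0 : ∀ x, 0 ≤ x → 0 ≤ Φ₂ x := fun x hx => (hΦ₂ x).symm ▸
    intervalIntegral.integral_nonneg hx fun s hs => hφ₂0 s hs.1
  by_cases hint : IntervalIntegrable (fun s => Φ₁ s / s ^ (p + 1)) volume 0 t
  swap
  · rw [intervalIntegral.integral_undef hint, mul_zero]
    exact mul_nonneg (by positivity) (hΦ₂0 _ (by positivity))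
  rw [intervalIntegrable_iff_integrableOn_Ioo_of_le ht.le] at hint
  set a := (r / p) ^ (1 / r) * t
  have ha : 0 ≤ a := by positivity
  have hta : (p / r) ^ (1 / r) * a = t := by
    rw [← mul_assoc, ← Real.mul_rpow (by positivity) (by positivity),
      show p / r * (r / p) = 1 by field_simp, Real.one_rpow, one_mul]
  have hmodf := hmod _ (fun s => indicator_nonneg (fun _ _ => ha) s)
    ((antitone_indicator_Iic_const ha 1).antitoneOn _)
  rw [setIntegral_Ioi_zero_comp_indicator_Iic_one (fun x => Φ₂ (K * x))
    (by rw [mul_zero, hΦ₂, intervalIntegral.integral_same])] at hmodf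
  have htail := setIntegral_Ioi_one_le_setIntegral_comp_Hpr_indicator Φ₁ hΦ₁0 hp0 hr0 ha
    (hta ▸ integrableOn_Ioi_one_comp_mul_rpow Φ₁ hp0 ht hint)
  rw [hta] at htail
  calc t ^ p * ∫ s in (0:ℝ)..t, Φ₁ s / s ^ (p + 1)
      = (1 / p) * ∫ u in Ioi 1, Φ₁ (t * u ^ (-(1 / p))) := by
        rw [intervalIntegral.integral_of_le ht.le, integral_Ioc_eq_integral_Ioo,
          integral_Ioo_div_rpow_eq Φ₁ hp0 ht]
        field_simp
    _ ≤ (1 / p) * Φ₂ (K * (r / p) ^ (1 / r) * t) := by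
        rw [mul_assoc K]
        gcongr
        exact htail.trans hmodf

/-- If Young functions `Φ₁, Φ₂` satisfy the modular inequality
`∫₀^∞ Φ₁(H^{p,r}f*(t)) dt ≤ ∫₀^∞ Φ₂(K f*(s)) ds` for all nonnegative nonincreasing
`f*`, then `t^p ∫₀ᵗ Φ₁(s)/s^{p+1} ds ≤ (1/p) Φ₂(K (r/p)^{1/r} t)` for all `t > 0`. -/
theorem Hpr_modular_implies_ZygmundStromberg (p r : ℝ) (hp : 1 < p) (hr : 1 ≤ r)
    (φ₁ φ₂ Φ₁ Φ₂ : ℝ → ℝ)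
    (hφ₁mono : MonotoneOn φ₁ (Set.Ici 0)) (hφ₁0 : ∀ s, 0 ≤ s → 0 ≤ φ₁ s)
    (hφ₂mono : MonotoneOn φ₂ (Set.Ici 0)) (hφ₂0 : ∀ s, 0 ≤ s → 0 ≤ φ₂ s)
    (hΦ₁ : ∀ t, Φ₁ t = ∫ s in (0:ℝ)..t, φ₁ s)
    (hΦ₂ : ∀ t, Φ₂ t = ∫ s in (0:ℝ)..t, φ₂ s)
    {K : ℝ} (hK : 0 < K)
    (hmod : ∀ f : ℝ → ℝ, (∀ s, 0 ≤ f s) → AntitoneOn f (Set.Ioi 0) →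
      (∫ t in Set.Ioi (0:ℝ), Φ₁ (Hpr p r f t)) ≤ ∫ s in Set.Ioi (0:ℝ), Φ₂ (K * f s)) :
    ∀ t : ℝ, 0 < t →
      t ^ p * (∫ s in (0:ℝ)..t, Φ₁ s / s ^ (p + 1))
        ≤ (1 / p) * Φ₂ (K * (r / p) ^ (1 / r) * t) :=
  Hpr_modular_implies_ZygmundStromberg_general p r hp hr φ₁ φ₂ Φ₁ Φ₂ hφ₁0 hφ₂0 hΦ₁ hΦ₂ hK hmod
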